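/- The ℚ[q]-linear map Φ: 𝔸^d_q(Λ) → ℋ^d_q sending a partition λ of length n to M_λ(x_1,...,x_n) = ∑_{σ∈S_n} x_{σ(1)}^{λ_1}···x_{σ(n)}^{λ_n} is an algebra isomorphism; in particular, for partitions μ of length n and ν of length k, M_μ * M_ν = ∑_{a∈ℕ^n, b∈ℕ^k} c_{n,k}^{a,b} · M_{(μ+a, ν+b)_≤}, where * is the quantized shuffle product on ℋ^d_q. -/

import Mathlib

open MvPolynomial Finset

noncomputable section

/-- The quantization variable `q` in `ℚ[q]`. -/
def qv : Polynomial ℚ := Polynomial.X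

/-- `M_λ(x_1,…,x_n) = ∑_{σ ∈ S_n} x_{σ(1)}^{λ_1} ⋯ x_{σ(n)}^{λ_n}`, with
coefficients in `ℚ[q]`. -/
def Msym {n : ℕ} (lam : Fin n → ℕ) : MvPolynomial (Fin n) (Polynomial ℚ) :=
  ∑ σ : Equiv.Perm (Fin n), ∏ i : Fin n, X (σ i) ^ lam i

/-- The shuffle product of `ℋ^d_q`:
`(f₁ * f₂)(x_1,…,x_{n₁+n₂}) = ∑_I f₁(x_I) f₂(x_J) ∏_{j∈J, i∈I} (x_j − q x_i)^{d−1}`. -/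
def shuffle (d n₁ n₂ : ℕ) (f₁ : MvPolynomial (Fin n₁) (Polynomial ℚ))
    (f₂ : MvPolynomial (Fin n₂) (Polynomial ℚ)) :
    MvPolynomial (Fin (n₁ + n₂)) (Polynomial ℚ) :=
  ∑ I ∈ ((Finset.univ : Finset (Fin (n₁ + n₂))).powersetCard n₁).attach,
    have hI : I.1.card = n₁ := (Finset.mem_powersetCard.mp I.2).2
    have hJ : I.1ᶜ.card = n₂ := by
      have h := Finset.card_compl I.1
      rw [hI] at h
      simp only [Fintype.card_fin] at h
      omega
    rename (⇑(I.1.orderEmbOfFin hI)) f₁ * rename (⇑(I.1ᶜ.orderEmbOfFin hJ)) f₂ *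
      ∏ j ∈ I.1ᶜ, ∏ i ∈ I.1, (X j - C qv * X i) ^ (d - 1)

/-- The kernel polynomial `g_{n,k} = ∏_{s=n+1}^{n+k} ∏_{t=1}^{n} (x_s − q x_t)^{d−1}`,
with variables indexed by `Fin (n+k)`; its coefficients are the `c_{n,k}^{a,b}`. -/
def gFin (d n k : ℕ) : MvPolynomial (Fin (n + k)) (Polynomial ℚ) :=
  ∏ j : Fin k, ∏ i : Fin n,
    (X (Fin.natAdd n j) - C qv * X (Fin.castAdd k i)) ^ (d - 1)

/-- The linear map `Φ` on the degree-`n` component, sending a partition `λ` of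
length `n` to `M_λ`. -/
def Phi (n : ℕ) :
    ({v : Fin n → ℕ // Monotone v} →₀ Polynomial ℚ) →ₗ[Polynomial ℚ]
      MvPolynomial (Fin n) (Polynomial ℚ) :=
  Finsupp.linearCombination (Polynomial ℚ) (fun lam : {v : Fin n → ℕ // Monotone v} => Msym lam.1)

/-!
Write `x^w` for `∏ i, X i ^ w i`, so that `M_w = ∑_π π(x^w)` over all permutations `π`, for any
exponent vector `w`, and `M_w` depends only on the multiset of entries of `w`.

The summand of the shuffle product indexed by the `n`-subset `I` expands, over the permutations
`σ ∈ S_n` and `τ ∈ S_k` in `M_μ` and `M_ν`, into the images of `x^{(μ,ν)} g_{n,k}` under the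
permutations of `Fin (n + k)` sending the two blocks onto `I` and `Iᶜ` in the orders given by
`σ` and `τ`; as `(I, σ, τ)` varies these are all the permutations of `Fin (n + k)`, each once. Hence
`M_μ * M_ν = ∑_π π(x^{(μ,ν)} g_{n,k})`, and expanding `g_{n,k}` into monomials gives the formula.

`Φ` is injective because for partitions `λ ≠ μ` the monomial `x^λ` does not occur in `M_μ`; it
reaches every symmetric `f` in `n` variables, since `n! f = ∑_π π f = ∑_e f_e M_e`.
-/

lemma Tuple.eq_of_comp_perm_eq {α : Type*} [PartialOrder α] {n : ℕ} {f g : Fin n → α}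
    (hf : Monotone f) (hg : Monotone g) {σ : Equiv.Perm (Fin n)} (h : f ∘ σ = g) : g = f := by
  subst h
  exact Tuple.unique_monotone (τ := 1) hg hf

lemma Finset.prod_orderEmbOfFin_comp_perm {α M : Type*} [LinearOrder α] [CommMonoid M]
    (s : Finset α) {m : ℕ} (h : #s = m) (σ : Equiv.Perm (Fin m)) (f : α → M) :
    ∏ i, f (s.orderEmbOfFin h (σ i)) = ∏ x ∈ s, f x := by
  rw [Equiv.prod_comp σ fun i => f (s.orderEmbOfFin h i), ← Finset.prod_coe_sort s f]
  exact Fintype.prod_equiv (s.orderIsoOfFin h).toEquiv _ _ fun i => by simp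

section Msym

variable {n : ℕ}

lemma Msym_eq_sum_rename (w : Fin n → ℕ) :
    Msym w = ∑ π : Equiv.Perm (Fin n), rename π (∏ i, X i ^ w i) := by
  simp [Msym, map_prod]

lemma Msym_comp_perm (w : Fin n → ℕ) (ρ : Equiv.Perm (Fin n)) : Msym (w ∘ ρ) = Msym w := by
  rw [Msym, ← Equiv.sum_comp (Equiv.mulRight ρ)]
  exact Finset.sum_congr rfl fun σ _ => Fintype.prod_equiv ρ _ _ fun i => rfl

lemma Msym_isSymmetric (w : Fin n → ℕ) : (Msym w).IsSymmetric := fun π => by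
  rw [Msym, map_sum]
  exact Fintype.sum_equiv (Equiv.mulLeft π) _ _ fun σ => by simp [map_prod, Equiv.Perm.mul_apply]

lemma prod_X_pow_perm (w : Fin n → ℕ) (σ : Equiv.Perm (Fin n)) :
    ∏ i, (X (σ i) : MvPolynomial (Fin n) (Polynomial ℚ)) ^ w i =
      monomial (Finsupp.equivFunOnFinite.symm (w ∘ σ.symm)) 1 := by
  rw [monomial_eq, C_1, one_mul, Finsupp.prod_fintype _ _ fun _ => pow_zero _]
  exact Fintype.prod_equiv σ _ _ fun i => by simp

lemma coeff_Msym (w : Fin n → ℕ) (e : Fin n →₀ ℕ) :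
    coeff e (Msym w) = #{σ : Equiv.Perm (Fin n) | ⇑e ∘ σ = w} := by
  simp only [Msym, coeff_sum, prod_X_pow_perm, coeff_monomial]
  rw [Finset.sum_boole]
  congr 2
  refine Finset.filter_congr fun σ _ => ?_
  rw [Equiv.symm_apply_eq, Equiv.comp_symm_eq, eq_comm]
  rfl

lemma prod_X_pow_mul_monomial (w : Fin n → ℕ) (e : Fin n →₀ ℕ) (c : Polynomial ℚ) :
    (∏ i, X i ^ w i) * monomial e c =
      c • ∏ i, (X i : MvPolynomial (Fin n) (Polynomial ℚ)) ^ (w i + e i) := by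
  rw [monomial_eq, Finsupp.prod_fintype _ _ fun _ => pow_zero _, smul_eq_C_mul]
  simp only [pow_add, Finset.prod_mul_distrib]
  ring

lemma sum_rename_perm_prod_X_pow_mul (w : Fin n → ℕ) (p : MvPolynomial (Fin n) (Polynomial ℚ)) :
    ∑ π : Equiv.Perm (Fin n), rename π ((∏ i, X i ^ w i) * p) =
      ∑ e ∈ p.support, coeff e p • Msym (w + ⇑e) := by
  conv_lhs => rw [p.as_sum]
  simp only [Finset.mul_sum, map_sum, prod_X_pow_mul_monomial, map_smul]
  rw [Finset.sum_comm]
  refine Finset.sum_congr rfl fun e _ => ?_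
  rw [Msym_eq_sum_rename, Finset.smul_sum]
  rfl

end Msym

lemma Fin.append_add_eq {α : Type*} [Add α] {n k : ℕ} (a : Fin n → α) (b : Fin k → α)
    (e : Fin (n + k) → α) :
    Fin.append (fun i => a i + e (Fin.castAdd k i)) (fun j => b j + e (Fin.natAdd n j)) =
      Fin.append a b + e := by
  funext l
  refine Fin.addCases (fun i => ?_) (fun j => ?_) l <;> simp

section Phi

variable {n : ℕ}

lemma coeff_Msym_eq_zero {lam mu : Fin n → ℕ} (hlam : Monotone lam) (hmu : Monotone mu)
    (hne : mu ≠ lam) : coeff (Finsupp.equivFunOnFinite.symm lam) (Msym mu) = 0 := by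
  rw [coeff_Msym, Nat.cast_eq_zero, Finset.card_eq_zero, Finset.filter_eq_empty_iff]
  exact fun σ _ h => hne (Tuple.eq_of_comp_perm_eq hlam hmu h)

lemma coeff_Msym_self_ne_zero (w : Fin n → ℕ) :
    coeff (Finsupp.equivFunOnFinite.symm w) (Msym w) ≠ 0 := by
  rw [coeff_Msym, Nat.cast_ne_zero]
  exact Finset.card_ne_zero_of_mem (Finset.mem_filter.2 ⟨Finset.mem_univ 1, rfl⟩)

lemma coeff_Phi (g : {v : Fin n → ℕ // Monotone v} →₀ Polynomial ℚ)
    (lam : {v : Fin n → ℕ // Monotone v}) :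
    coeff (Finsupp.equivFunOnFinite.symm lam.1) (Phi n g) =
      g lam * coeff (Finsupp.equivFunOnFinite.symm lam.1) (Msym lam.1) := by
  rw [Phi, Finsupp.linearCombination_apply, Finsupp.sum, coeff_sum]
  simp only [coeff_smul, smul_eq_mul]
  refine Finset.sum_eq_single lam (fun mu _ hne => ?_) fun h => by
    simp [Finsupp.notMem_support_iff.1 h]
  rw [coeff_Msym_eq_zero lam.2 mu.2 (Subtype.coe_ne_coe.2 hne), mul_zero]

lemma Phi_injective : Function.Injective (Phi n) := by
  refine (injective_iff_map_eq_zero _).2 fun g hg => Finsupp.ext fun lam => ?_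
  have h := coeff_Phi g lam
  rw [hg, coeff_zero, eq_comm, mul_eq_zero] at h
  exact h.resolve_right (coeff_Msym_self_ne_zero lam.1)

lemma Msym_mem_range_Phi (w : Fin n → ℕ) : Msym w ∈ LinearMap.range (Phi n) :=
  ⟨Finsupp.single ⟨w ∘ Tuple.sort w, Tuple.monotone_sort w⟩ 1, by simp [Phi, Msym_comp_perm]⟩

lemma range_Phi :
    LinearMap.range (Phi n) =
      Subalgebra.toSubmodule (symmetricSubalgebra (Fin n) (Polynomial ℚ)) := by
  refine le_antisymm ?_ fun f hf => ?_
  · rw [Phi, Finsupp.range_linearCombination, Submodule.span_le]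
    rintro _ ⟨lam, rfl⟩
    exact Msym_isSymmetric lam.1
  · have hsymm : ∑ π : Equiv.Perm (Fin n), rename π f = (n.factorial : ℚ) • f := by
      simp [(mem_symmetricSubalgebra f).1 hf _, Finset.card_univ, Fintype.card_perm,
        ← Nat.cast_smul_eq_nsmul ℚ]
    have hexpand := sum_rename_perm_prod_X_pow_mul 0 f
    simp only [Pi.zero_apply, pow_zero, Finset.prod_const_one, one_mul, zero_add] at hexpand
    have hf' : f = (n.factorial : ℚ)⁻¹ • ∑ e ∈ f.support, coeff e f • Msym ⇑e := by
      rw [← hexpand, hsymm, smul_smul, inv_mul_cancel₀ (by positivity), one_smul]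
    rw [hf']
    exact Submodule.smul_of_tower_mem _ _
      (Submodule.sum_mem _ fun e _ => Submodule.smul_mem _ _ (Msym_mem_range_Phi _))

end Phi

section Shuffle

variable {n k : ℕ}

lemma card_compl_eq_of_mem_powersetCard {I : Finset (Fin (n + k))}
    (hI : I ∈ (univ : Finset (Fin (n + k))).powersetCard n) : #Iᶜ = k := by
  rw [card_compl, (mem_powersetCard.1 hI).2, Fintype.card_fin, Nat.add_sub_cancel_left]

def shufflePerm
    (I : {I : Finset (Fin (n + k)) // I ∈ (univ : Finset (Fin (n + k))).powersetCard n})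
    (σ : Equiv.Perm (Fin n)) (τ : Equiv.Perm (Fin k)) : Equiv.Perm (Fin (n + k)) :=
  finSumFinEquiv.symm.trans <| (Equiv.sumCongr σ τ).trans <|
    finSumEquivOfFinset (mem_powersetCard.1 I.2).2 (card_compl_eq_of_mem_powersetCard I.2)

variable (I : {I : Finset (Fin (n + k)) // I ∈ (univ : Finset (Fin (n + k))).powersetCard n})
  (σ : Equiv.Perm (Fin n)) (τ : Equiv.Perm (Fin k))

@[simp]
lemma shufflePerm_castAdd (i : Fin n) :
    shufflePerm I σ τ (Fin.castAdd k i) = I.1.orderEmbOfFin (mem_powersetCard.1 I.2).2 (σ i) := by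
  simp [shufflePerm, finSumEquivOfFinset_inl]

@[simp]
lemma shufflePerm_natAdd (j : Fin k) :
    shufflePerm I σ τ (Fin.natAdd n j) =
      I.1ᶜ.orderEmbOfFin (card_compl_eq_of_mem_powersetCard I.2) (τ j) := by
  simp [shufflePerm, finSumEquivOfFinset_inr]

lemma image_shufflePerm_castAdd :
    univ.image (fun i => shufflePerm I σ τ (Fin.castAdd k i)) = I.1 := by
  have h : (fun i => shufflePerm I σ τ (Fin.castAdd k i)) =
      I.1.orderEmbOfFin (mem_powersetCard.1 I.2).2 ∘ σ :=
    funext (shufflePerm_castAdd I σ τ)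
  rw [h, ← Finset.image_image, Finset.image_univ_equiv, Finset.image_orderEmbOfFin_univ]

lemma shufflePerm_bijective :
    Function.Bijective fun x : {I : Finset (Fin (n + k)) // I ∈ univ.powersetCard n} ×
      Equiv.Perm (Fin n) × Equiv.Perm (Fin k) => shufflePerm x.1 x.2.1 x.2.2 := by
  refine (Fintype.bijective_iff_injective_and_card _).2 ⟨?_, ?_⟩
  · rintro ⟨I, σ, τ⟩ ⟨I', σ', τ'⟩ h
    obtain rfl : I = I' := Subtype.ext <| by
      simpa only [image_shufflePerm_castAdd] using congr(univ.image fun i => $h (Fin.castAdd k i))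
    have hσ : σ = σ' := Equiv.ext fun i => by simpa using congr($h (Fin.castAdd k i))
    have hτ : τ = τ' := Equiv.ext fun j => by simpa using congr($h (Fin.natAdd n j))
    rw [hσ, hτ]
  · simp only [Fintype.card_prod, Fintype.card_coe, card_powersetCard, Fintype.card_perm,
      card_univ, Fintype.card_fin, ← mul_assoc]
    rw [Nat.choose_symm_add]
    exact Nat.add_choose_mul_factorial_mul_factorial n k

lemma sum_shufflePerm {M : Type*} [AddCommMonoid M] (F : Equiv.Perm (Fin (n + k)) → M) :
    ∑ I ∈ (univ.powersetCard n).attach, ∑ σ, ∑ τ, F (shufflePerm I σ τ) = ∑ π, F π := by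
  rw [← shufflePerm_bijective.sum_comp F, ← univ_eq_attach, Fintype.sum_prod_type]
  simp only [Fintype.sum_prod_type]

lemma rename_shufflePerm_gFin (d : ℕ) :
    rename (shufflePerm I σ τ) (gFin d n k) =
      ∏ j ∈ I.1ᶜ, ∏ i ∈ I.1, (X j - C qv * X i) ^ (d - 1) := by
  simp only [gFin, map_prod, map_pow, map_sub, map_mul, rename_X, rename_C, shufflePerm_castAdd,
    shufflePerm_natAdd]
  rw [← Finset.prod_orderEmbOfFin_comp_perm I.1ᶜ _ τ]
  refine Finset.prod_congr rfl fun j _ => ?_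
  rw [← Finset.prod_orderEmbOfFin_comp_perm I.1 _ σ]

lemma rename_Msym_mul_rename_Msym (μ : Fin n → ℕ) (ν : Fin k → ℕ) (hI : #I.1 = n)
    (hJ : #I.1ᶜ = k) :
    rename (I.1.orderEmbOfFin hI) (Msym μ) * rename (I.1ᶜ.orderEmbOfFin hJ) (Msym ν) =
      ∑ σ, ∑ τ, rename (shufflePerm I σ τ) (∏ l, X l ^ Fin.append μ ν l) := by
  simp only [Msym, map_sum, map_mul, map_prod, map_pow, rename_X, Finset.sum_mul_sum,
    Fin.prod_univ_add, Fin.append_left, Fin.append_right, shufflePerm_castAdd, shufflePerm_natAdd]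

end Shuffle

theorem shuffle_Msym (d : ℕ) {n k : ℕ} (μ : Fin n → ℕ) (ν : Fin k → ℕ) :
    shuffle d n k (Msym μ) (Msym ν) =
      ∑ e ∈ (gFin d n k).support, coeff e (gFin d n k) • Msym (Fin.append μ ν + ⇑e) := by
  calc shuffle d n k (Msym μ) (Msym ν)
      = ∑ I ∈ (univ.powersetCard n).attach, ∑ σ, ∑ τ,
          rename (shufflePerm I σ τ) ((∏ l, X l ^ Fin.append μ ν l) * gFin d n k) := by
        refine Finset.sum_congr rfl fun I _ => ?_
        simp only [map_mul, rename_shufflePerm_gFin, ← Finset.sum_mul]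
        rw [rename_Msym_mul_rename_Msym]
    _ = ∑ π : Equiv.Perm (Fin (n + k)), rename π ((∏ l, X l ^ Fin.append μ ν l) * gFin d n k) :=
        sum_shufflePerm fun π => rename π ((∏ l, X l ^ Fin.append μ ν l) * gFin d n k)
    _ = _ := sum_rename_perm_prod_X_pow_mul _ _

/-- The sum over `a ∈ ℕ^n`, `b ∈ ℕ^k` is realised as a sum over the monomials `e` of `g_{n,k}`,
with `a i = e i` and `b j = e (n+j)`. -/
theorem Phi_algebra_isomorphism_general (d : ℕ) :
    (∀ n : ℕ, Function.Injective (Phi n)) ∧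
    (∀ n : ℕ, Set.range (Phi n) = {f : MvPolynomial (Fin n) (Polynomial ℚ) | f.IsSymmetric}) ∧
    (∀ (n k : ℕ) (μ : Fin n → ℕ) (ν : Fin k → ℕ), Monotone μ → Monotone ν →
      shuffle d n k (Msym μ) (Msym ν)
        = ∑ e ∈ (gFin d n k).support,
            MvPolynomial.coeff e (gFin d n k) •
              Msym (Fin.append (fun i => μ i + e (Fin.castAdd k i))
                      (fun j => ν j + e (Fin.natAdd n j)) ∘
                    Tuple.sort (Fin.append (fun i => μ i + e (Fin.castAdd k i))
                      (fun j => ν j + e (Fin.natAdd n j))))) := by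
  refine ⟨fun n => Phi_injective, fun n => ?_, fun n k μ ν _ _ => ?_⟩
  · rw [← LinearMap.coe_range, range_Phi]
    rfl
  · rw [shuffle_Msym]
    refine Finset.sum_congr rfl fun e _ => ?_
    rw [Msym_comp_perm, Fin.append_add_eq]

/-- Theorem 4.7: `Φ : 𝔸^d_q(Λ) → ℋ^d_q` is an algebra isomorphism.  In each
degree `Φ` is a linear isomorphism onto the symmetric polynomials, and it is
multiplicative:
`M_μ * M_ν = ∑_{a,b} c_{n,k}^{a,b} M_{(μ+a, ν+b)_≤}` (the sum over `a ∈ ℕ^n`,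
`b ∈ ℕ^k` being realised as a sum over the monomials `e` of `g_{n,k}`, with
`a i = e i` and `b j = e (n+j)`). -/
theorem Phi_algebra_isomorphism (d : ℕ) (hd : 0 < d) :
    (∀ n : ℕ, Function.Injective (Phi n)) ∧
    (∀ n : ℕ, Set.range (Phi n) = {f : MvPolynomial (Fin n) (Polynomial ℚ) | f.IsSymmetric}) ∧
    (∀ (n k : ℕ) (μ : Fin n → ℕ) (ν : Fin k → ℕ), Monotone μ → Monotone ν →
      shuffle d n k (Msym μ) (Msym ν)
        = ∑ e ∈ (gFin d n k).support,
            MvPolynomial.coeff e (gFin d n k) •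
              Msym (Fin.append (fun i => μ i + e (Fin.castAdd k i))
                      (fun j => ν j + e (Fin.natAdd n j)) ∘
                    Tuple.sort (Fin.append (fun i => μ i + e (Fin.castAdd k i))
                      (fun j => ν j + e (Fin.natAdd n j))))) :=
  Phi_algebra_isomorphism_general d

end
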